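/- Let p be a prime and let g : ℤ_p → ℤ_p be a compatible function that is bijective modulo p^k for every k = 1, 2, 3, …. Then g preserves the normalized Haar measure μ_p, i.e., μ_p(g^{−1}(A)) = μ_p(A) for every measurable A ⊆ ℤ_p. -/

import Mathlib

open MeasureTheory Filter

/-- Borel measurable structure on the `p`-adic integers. -/
noncomputable instance padicMS (p : ℕ) [Fact p.Prime] : MeasurableSpace ℤ_[p] := borel _

instance padicBS (p : ℕ) [Fact p.Prime] : BorelSpace ℤ_[p] := ⟨rfl⟩

/-- The Haar measure `μ_p` on `ℤ_p`, normalized so that `μ_p(ℤ_p) = 1`. -/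
noncomputable def padicHaar (p : ℕ) [Fact p.Prime] : Measure ℤ_[p] :=
  Measure.addHaarMeasure (⊤ : TopologicalSpace.PositiveCompacts ℤ_[p])

/-- The map `f̄_k : ℤ/p^kℤ → ℤ/p^kℤ` induced by `f : ℤ_p → ℤ_p` via reduction
modulo `p^k` (well-defined whenever `f` is compatible, i.e. 1-Lipschitz). -/
noncomputable def modMap (p : ℕ) [Fact p.Prime] (f : ℤ_[p] → ℤ_[p]) (k : ℕ) :
    ZMod (p ^ k) → ZMod (p ^ k) :=
  fun z => PadicInt.toZModPow k (f ((z.val : ℕ) : ℤ_[p]))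

/-- The map `F̄_k : (ℤ/p^kℤ)^n → (ℤ/p^kℤ)^m` induced by `F : ℤ_p^n → ℤ_p^m` via
coordinatewise reduction modulo `p^k` (well-defined whenever `F` is compatible). -/
noncomputable def modMapV (p : ℕ) [Fact p.Prime] {n m : ℕ}
    (F : (Fin n → ℤ_[p]) → (Fin m → ℤ_[p])) (k : ℕ) :
    (Fin n → ZMod (p ^ k)) → (Fin m → ZMod (p ^ k)) :=
  fun v i => PadicInt.toZModPow k (F (fun j => ((v j).val : ℤ_[p])) i)

/-- The sphere `S_{p^{-r}}(y) = {z : ‖z - y‖ = p^{-r}}` in `ℤ_p`. -/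
def padicSphere (p : ℕ) [Fact p.Prime] (y : ℤ_[p]) (r : ℕ) : Set ℤ_[p] :=
  {z : ℤ_[p] | ‖z - y‖ = (p : ℝ) ^ (-(r : ℤ))}

/-- The probability measure on the sphere `S_{p^{-r}}(y)`, obtained by restricting the
normalized Haar measure `μ_p` to the sphere and normalizing. -/
noncomputable def sphereMeasure (p : ℕ) [Fact p.Prime] (y : ℤ_[p]) (r : ℕ) : Measure ℤ_[p] :=
  (padicHaar p (padicSphere p y r))⁻¹ • (padicHaar p).restrict (padicSphere p y r)

/-- `f` is ergodic on the sphere `S_{p^{-r}}(y)`: it maps the sphere into itself, preserves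
the normalized restriction of the Haar measure to the sphere, and every invariant
measurable subset of the sphere has normalized measure `0` or `1`. -/
def ErgodicOnSphere (p : ℕ) [Fact p.Prime] (f : ℤ_[p] → ℤ_[p]) (y : ℤ_[p]) (r : ℕ) : Prop :=
  Set.MapsTo f (padicSphere p y r) (padicSphere p y r) ∧
  (∀ A : Set ℤ_[p], MeasurableSet A →
      sphereMeasure p y r (f ⁻¹' A) = sphereMeasure p y r A) ∧
  (∀ A : Set ℤ_[p], MeasurableSet A → A ⊆ padicSphere p y r →
      f ⁻¹' A ∩ padicSphere p y r = A →
      sphereMeasure p y r A = 0 ∨ sphereMeasure p y r A = 1)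

/-- `d ∈ ℤ_p` is primitive modulo `p²`: its image in `ℤ/p²ℤ` generates the whole
group of units `(ℤ/p²ℤ)ˣ`. -/
def PrimitiveModSq (p : ℕ) [Fact p.Prime] (d : ℤ_[p]) : Prop :=
  ∃ u : (ZMod (p ^ 2))ˣ, (u : ZMod (p ^ 2)) = PadicInt.toZModPow 2 d ∧
    ∀ v : (ZMod (p ^ 2))ˣ, v ∈ Subgroup.zpowers u

/-!
The fibres of reduction modulo `p^k` are the closed balls of radius `p^{-k}`; together they form
a π-system generating the Borel σ-algebra. Compatibility gives `ḡ_k ∘ (mod p^k) = (mod p^k) ∘ g`,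
so when `ḡ_k` is bijective the `g`-preimage of a fibre is again a fibre of the same level, and
all fibres of one level have the same Haar measure, being translates of each other. Hence the
pushforward of `μ_p` under `g` agrees with `μ_p` on the π-system, and so everywhere.
-/

open Function TopologicalSpace

theorem measure_preimage_singleton_eq_of_surjective {G H F : Type*} [AddGroup G] [AddGroup H]
    [MeasurableSpace G] [MeasurableAdd G] [FunLike F G H] [AddMonoidHomClass F G H]
    (μ : Measure G) [μ.IsAddLeftInvariant] {φ : F} (hφ : Surjective φ) (a b : H) :
    μ (φ ⁻¹' {a}) = μ (φ ⁻¹' {b}) := by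
  obtain ⟨x, rfl⟩ := hφ a
  obtain ⟨y, rfl⟩ := hφ b
  have hshift : φ ⁻¹' {φ x} = (fun z => (y + -x) + z) ⁻¹' (φ ⁻¹' {φ y}) := by
    ext z
    simp only [Set.mem_preimage, Set.mem_singleton_iff, map_add, map_neg, add_assoc, add_eq_left,
      neg_add_eq_zero]
    exact eq_comm
  rw [hshift, measure_preimage_add]

namespace PadicInt

variable {p : ℕ} [Fact p.Prime]

theorem toZModPow_eq_iff_norm_sub_le (k : ℕ) (x y : ℤ_[p]) :
    toZModPow k x = toZModPow k y ↔ ‖x - y‖ ≤ (p : ℝ)⁻¹ ^ k := by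
  rw [inv_pow, ← zpow_natCast, ← zpow_neg, norm_le_pow_iff_mem_span_pow, ← ker_toZModPow,
    RingHom.mem_ker, map_sub, sub_eq_zero]

theorem preimage_toZModPow_singleton (k : ℕ) (x : ℤ_[p]) :
    toZModPow k ⁻¹' {toZModPow k x} = Metric.closedBall x ((p : ℝ)⁻¹ ^ k) := by
  ext y
  simp [toZModPow_eq_iff_norm_sub_le, dist_eq_norm]

theorem preimage_toZModPow_singleton_subset {k l : ℕ} (h : k ≤ l) (x : ℤ_[p]) :
    toZModPow l ⁻¹' {toZModPow l x} ⊆ toZModPow k ⁻¹' {toZModPow k x} := by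
  intro y hy
  simp only [Set.mem_preimage, Set.mem_singleton_iff] at hy ⊢
  rw [← cast_toZModPow k l h, hy, cast_toZModPow k l h]

variable (p) in
def cylinders : Set (Set ℤ_[p]) :=
  {s | ∃ (k : ℕ) (a : ZMod (p ^ k)), s = toZModPow k ⁻¹' {a}}

theorem isPiSystem_cylinders : IsPiSystem (cylinders p) := by
  rintro _ ⟨k, _, rfl⟩ _ ⟨l, _, rfl⟩ ⟨x, rfl, rfl⟩
  rcases le_total k l with h | h
  · exact ⟨l, _, Set.inter_eq_right.2 (preimage_toZModPow_singleton_subset h x)⟩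
  · exact ⟨k, _, Set.inter_eq_left.2 (preimage_toZModPow_singleton_subset h x)⟩

theorem isTopologicalBasis_cylinders : IsTopologicalBasis (cylinders p) := by
  have hp : (0 : ℝ) < (p : ℝ)⁻¹ := by simpa using (Fact.out : p.Prime).pos
  refine isTopologicalBasis_of_isOpen_of_nhds ?_ fun x u hx hu => ?_
  · rintro _ ⟨k, a, rfl⟩
    obtain ⟨x, rfl⟩ := ZMod.ringHom_surjective (toZModPow k) a
    rw [preimage_toZModPow_singleton]
    exact IsUltrametricDist.isOpen_closedBall x (pow_pos hp k).ne'
  · have hp1 : (p : ℝ)⁻¹ < 1 :=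
      inv_lt_one_of_one_lt₀ (by exact_mod_cast (Fact.out : p.Prime).one_lt)
    obtain ⟨k, -, hk⟩ := (Metric.nhds_basis_closedBall_pow hp hp1).mem_iff.1 (hu.mem_nhds hx)
    refine ⟨_, ⟨k, toZModPow k x, rfl⟩, rfl, ?_⟩
    rwa [preimage_toZModPow_singleton]

end PadicInt

open PadicInt

section Compatible

variable {p : ℕ} [Fact p.Prime] {g : ℤ_[p] → ℤ_[p]}

theorem modMap_toZModPow (hg : ∀ x y : ℤ_[p], ‖g x - g y‖ ≤ ‖x - y‖) (k : ℕ) (x : ℤ_[p]) :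
    modMap p g k (toZModPow k x) = toZModPow k (g x) := by
  rw [modMap, toZModPow_eq_iff_norm_sub_le]
  refine (hg _ _).trans ((toZModPow_eq_iff_norm_sub_le k _ _).1 ?_)
  simp

theorem exists_preimage_toZModPow_preimage_singleton
    (hg : ∀ x y : ℤ_[p], ‖g x - g y‖ ≤ ‖x - y‖) {k : ℕ} (hk : Bijective (modMap p g k))
    (a : ZMod (p ^ k)) : ∃ b, g ⁻¹' (toZModPow k ⁻¹' {a}) = toZModPow k ⁻¹' {b} := by
  obtain ⟨b, rfl⟩ := hk.2 a
  refine ⟨b, Set.ext fun x => ?_⟩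
  simp [← modMap_toZModPow hg, hk.1.eq_iff]

end Compatible

instance isAddHaarMeasure_padicHaar (p : ℕ) [Fact p.Prime] : (padicHaar p).IsAddHaarMeasure := by
  unfold padicHaar; infer_instance

/-- A compatible (1-Lipschitz) function `g : ℤ_p → ℤ_p` that is bijective modulo `p^k`
for every `k ≥ 1` preserves the normalized Haar measure `μ_p`. -/
theorem measurePreserving_of_compatible_bijective_mod (p : ℕ) [Fact p.Prime]
    (g : ℤ_[p] → ℤ_[p]) (hg : ∀ x y : ℤ_[p], ‖g x - g y‖ ≤ ‖x - y‖)
    (hbij : ∀ k : ℕ, 1 ≤ k → Function.Bijective (modMap p g k)) :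
    ∀ A : Set ℤ_[p], MeasurableSet A → padicHaar p (g ⁻¹' A) = padicHaar p A := by
  have hlip : LipschitzWith 1 g :=
    .of_dist_le_mul fun x y => by simpa [dist_eq_norm] using hg x y
  have hgm : Measurable g := hlip.continuous.measurable
  have hbij_all : ∀ k, Bijective (modMap p g k)
    | 0 => haveI : Subsingleton (ZMod (p ^ 0)) := inferInstanceAs (Subsingleton (ZMod 1))
      bijective_of_subsingleton _
    | k + 1 => hbij (k + 1) k.succ_pos
  have hmap : (padicHaar p).map g = padicHaar p := by
    refine ext_of_generate_finite _ isTopologicalBasis_cylinders.borel_eq_generateFrom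
      isPiSystem_cylinders ?_ (by rw [Measure.map_apply hgm .univ, Set.preimage_univ])
    rintro _ ⟨k, a, rfl⟩
    obtain ⟨b, hb⟩ := exists_preimage_toZModPow_preimage_singleton hg (hbij_all k) a
    have hmeas := (isTopologicalBasis_cylinders.isOpen ⟨k, a, rfl⟩).measurableSet
    rw [Measure.map_apply hgm hmeas, hb]
    exact measure_preimage_singleton_eq_of_surjective _ (ZMod.ringHom_surjective _) b a
  intro A hA
  rw [← Measure.map_apply hgm hA, hmap]
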